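/- For every natural number N with N > 623 there exists a prime p not dividing N such that ψ(N) > (12/(p−1))·(6·(p+1)^2 − 2^{ω(N)}), where ψ is the Dedekind psi function and ω(N) the number of distinct prime divisors of N. -/

import Mathlib

/-!
Let `p` be the least prime not dividing `N`, so every prime below `p` divides `N`. Since
`ψ(N) ≥ N · ∏_{q ∈ S} (1 + 1/q)` for any set `S` of prime factors of `N`, we get `ψ(N) ≥ N`,
`ψ(N) ≥ 2N` once `6 ∣ N`, and `ψ(N) ≥ ∏_{q < p} (q + 1)` because `∏_{q < p} q ∣ N`. For `p ≤ 14`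
the first two bounds suffice because `N > 623`. For `p ≥ 15`, a Bertrand prime `q ∈ (p/2, p)` together
with `2, 3, 5, 7` gives `∏_{q < p} (q + 1) ≥ 288 (p + 2)`, which beats `72 (p + 1)² / (p - 1)`.
-/

open Finset

/-- The Dedekind psi function `ψ(N) = N · ∏_{q prime, q ∣ N} (1 + 1/q)`. -/
noncomputable def dedekindPsi (N : ℕ) : ℚ :=
  (N : ℚ) * ∏ q ∈ N.primeFactors, (1 + 1 / (q : ℚ))

theorem Nat.exists_prime_not_dvd_primesBelow_subset {N : ℕ} (hN : N ≠ 0) :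
    ∃ p, p.Prime ∧ ¬ p ∣ N ∧ p.primesBelow ⊆ N.primeFactors := by
  classical
  have hex : ∃ p, p.Prime ∧ ¬ p ∣ N := by
    obtain ⟨p, hNp, hp⟩ := Nat.exists_infinite_primes (N + 1)
    exact ⟨p, hp, fun h => by have := Nat.le_of_dvd (by omega) h; omega⟩
  obtain ⟨hp, hpN⟩ := Nat.find_spec hex
  refine ⟨Nat.find hex, hp, hpN, fun q hq => ?_⟩
  obtain ⟨hqp, hq⟩ := Nat.mem_primesBelow.mp hq
  exact Nat.mem_primeFactors.mpr ⟨hq, not_not.mp fun h => Nat.find_min hex hqp ⟨hq, h⟩, hN⟩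

theorem Nat.mul_add_two_le_prod_primesBelow {n : ℕ} (hn : 15 ≤ n) :
    288 * (n + 2) ≤ ∏ q ∈ n.primesBelow, (q + 1) := by
  obtain ⟨q, hq, hmq, hqm⟩ := Nat.exists_prime_lt_and_le_two_mul ((n - 1) / 2) (by omega)
  have hsub : insert q {2, 3, 5, 7} ⊆ n.primesBelow := by
    intro r hr
    simp only [mem_insert, mem_singleton] at hr
    rcases hr with rfl | rfl | rfl | rfl | rfl <;>
      exact Nat.mem_primesBelow.mpr ⟨by omega, by first | exact hq | norm_num⟩
  calc 288 * (n + 2) ≤ (q + 1) * ((2 + 1) * ((3 + 1) * ((5 + 1) * (7 + 1)))) := by omega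
    _ = ∏ r ∈ insert q {2, 3, 5, 7}, (r + 1) := by
      rw [prod_insert (by simp only [mem_insert, mem_singleton]; omega)]
      rfl
    _ ≤ ∏ r ∈ n.primesBelow, (r + 1) :=
      prod_le_prod_of_subset_of_one_le' hsub fun _ _ _ => Nat.le_add_left 1 _

theorem natCast_mul_prod_le_dedekindPsi {N : ℕ} {S : Finset ℕ} (hS : S ⊆ N.primeFactors) :
    N * ∏ q ∈ S, (1 + 1 / (q : ℚ)) ≤ dedekindPsi N :=
  mul_le_mul_of_nonneg_left
    (prod_le_prod_of_subset_of_one_le hS (fun _ _ => by positivity)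
      fun _ _ _ => le_add_of_nonneg_right (by positivity))
    N.cast_nonneg

theorem natCast_le_dedekindPsi (N : ℕ) : (N : ℚ) ≤ dedekindPsi N := by
  simpa using natCast_mul_prod_le_dedekindPsi (empty_subset N.primeFactors)

theorem prod_add_one_le_dedekindPsi {N : ℕ} (hN : N ≠ 0) {S : Finset ℕ}
    (hS : S ⊆ N.primeFactors) : ∏ q ∈ S, ((q : ℚ) + 1) ≤ dedekindPsi N := by
  have hsplit : ∏ q ∈ S, ((q : ℚ) + 1) = (∏ q ∈ S, q : ℕ) * ∏ q ∈ S, (1 + 1 / (q : ℚ)) := by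
    rw [Nat.cast_prod, ← prod_mul_distrib]
    refine prod_congr rfl fun q hq => ?_
    have : (q : ℚ) ≠ 0 := by exact_mod_cast (Nat.prime_of_mem_primeFactors (hS hq)).ne_zero
    field_simp
  have hdvd : ∏ q ∈ S, q ∣ N :=
    (prod_dvd_prod_of_subset _ _ _ hS).trans (Nat.prod_primeFactors_dvd N)
  rw [hsplit]
  refine le_trans ?_ (natCast_mul_prod_le_dedekindPsi hS)
  gcongr
  exact Nat.le_of_dvd (Nat.pos_of_ne_zero hN) hdvd

/-- For every `N > 623` there is a prime `p ∤ N` with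
`ψ(N) > (12/(p-1)) · (6(p+1)² − 2^{ω(N)})`, where `ω(N)` is the number of distinct
prime divisors of `N`. -/
theorem exists_prime_psi_bound (N : ℕ) (hN : 623 < N) :
    ∃ p : ℕ, p.Prime ∧ ¬ p ∣ N ∧
      (12 / ((p : ℚ) - 1)) * (6 * ((p : ℚ) + 1) ^ 2 - 2 ^ N.primeFactors.card)
        < dedekindPsi N := by
  obtain ⟨p, hp, hpN, hbelow⟩ := Nat.exists_prime_not_dvd_primesBelow_subset (by omega : N ≠ 0)
  refine ⟨p, hp, hpN, ?_⟩
  have hp1 : (1 : ℚ) < p := by exact_mod_cast hp.one_lt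
  rw [div_mul_eq_mul_div, div_lt_iff₀ (by linarith)]
  have hω : (0 : ℚ) < 2 ^ N.primeFactors.card := by positivity
  have hψN := natCast_le_dedekindPsi N
  have hN624 : (624 : ℚ) ≤ N := by exact_mod_cast hN
  obtain rfl | rfl | ⟨hp4, hp14⟩ | hp15 :
      p = 2 ∨ p = 3 ∨ (4 ≤ p ∧ p ≤ 14) ∨ 15 ≤ p := by have := hp.two_le; omega
  · -- `N` is odd
    have hN625 : (625 : ℚ) ≤ N := by exact_mod_cast (by omega : 625 ≤ N)
    have hω2 : (2 : ℚ) ≤ 2 ^ N.primeFactors.card :=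
      le_self_pow₀ one_le_two (card_pos.mpr (Nat.nonempty_primeFactors.mpr (by omega))).ne'
    norm_num
    linarith
  · norm_num
    linarith
  · have h6 : {2, 3} ⊆ N.primeFactors := fun q hq => hbelow <| by
      simp only [mem_insert, mem_singleton] at hq
      rcases hq with rfl | rfl <;> exact Nat.mem_primesBelow.mpr ⟨by omega, by norm_num⟩
    have hψ := natCast_mul_prod_le_dedekindPsi h6
    norm_num at hψ
    have hp4' : (4 : ℚ) ≤ p := by exact_mod_cast hp4
    have hp14' : (p : ℚ) ≤ 14 := by exact_mod_cast hp14
    nlinarith [mul_le_mul_of_nonneg_right hψ (by linarith : (0 : ℚ) ≤ p - 1)]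
  · have hprod : 288 * ((p : ℚ) + 2) ≤ ∏ q ∈ p.primesBelow, ((q : ℚ) + 1) := by
      exact_mod_cast Nat.mul_add_two_le_prod_primesBelow hp15
    have hψ := hprod.trans (prod_add_one_le_dedekindPsi (by omega) hbelow)
    have hp15' : (15 : ℚ) ≤ p := by exact_mod_cast hp15
    nlinarith [mul_le_mul_of_nonneg_right hψ (by linarith : (0 : ℚ) ≤ p - 1)]
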